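/- Let ⟨a_i,...,a_j⟩ be a cluster of the discretized sequence A of a 2-Visits input. In any feasible schedule in which no primary visit is placed at a gap, the primary visits of tasks i,...,j occupy exactly the set of positions {a_i,...,a_j} (in some permutation). -/
import Mathlib


/-- Auxiliary recursion for the discretized sequence, counting down from the top index. -/
def discAux (d : ℕ → ℕ) (n : ℕ) : ℕ → ℕ
  | 0 => d (n - 1)
  | k + 1 => min (discAux d n k - 1) (d (n - 1 - (k + 1)))

/-- The discretized sequence of `d` (of length `n`): `a (n-1) = d (n-1)` and
`a i = min (a (i+1) - 1) (d i)` for `i < n - 1`. -/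
def disc (d : ℕ → ℕ) (n : ℕ) (i : ℕ) : ℕ := discAux d n (n - 1 - i)
/-- A feasible 2-Visits schedule: each task `i < n` has a primary position `p i`
and a secondary position `s i`, all `2n` positions in `[1, 2n]` and pairwise distinct,
with `p i ≤ d i` and `s i < p i ∨ s i ≤ p i + d i`. -/
def Feasible2V (n : ℕ) (d p s : ℕ → ℕ) : Prop :=
  (∀ i < n, 1 ≤ p i ∧ p i ≤ 2 * n ∧ 1 ≤ s i ∧ s i ≤ 2 * n) ∧
  (∀ i < n, ∀ j < n, i ≠ j → p i ≠ p j) ∧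
  (∀ i < n, ∀ j < n, i ≠ j → s i ≠ s j) ∧
  (∀ i < n, ∀ j < n, p i ≠ s j) ∧
  (∀ i < n, p i ≤ d i) ∧
  (∀ i < n, s i < p i ∨ s i ≤ p i + d i)

lemma disc_succ (d : ℕ → ℕ) (n i : ℕ) (h : i + 1 < n) :
    disc d n i = min (disc d n (i + 1) - 1) (d i) := by
  unfold disc
  have h1 : n - 1 - i = (n - 1 - (i + 1)) + 1 := by omega
  rw [h1]
  show discAux d n ((n - 1 - (i + 1)) + 1) = _
  rw [discAux]
  have h2 : n - 1 - ((n - 1 - (i + 1)) + 1) = i := by omega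
  rw [h2]

lemma disc_last (d : ℕ → ℕ) (n : ℕ) : disc d n (n - 1) = d (n - 1) := by
  unfold disc
  rw [Nat.sub_self]
  rfl

lemma disc_lt (d : ℕ → ℕ) (n : ℕ) (hapos : ∀ i < n, 0 < disc d n i) :
    ∀ j < n, ∀ i < j, disc d n i < disc d n j := by
  intro j
  induction j with
  | zero => intro _ i hi; omega
  | succ j ih =>
    intro hj i hi
    have hstep : disc d n j < disc d n (j + 1) := by
      have h := disc_succ d n j hj
      have hp := hapos (j + 1) hj
      have hm : min (disc d n (j + 1) - 1) (d j) ≤ disc d n (j + 1) - 1 :=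
        min_le_left _ _
      omega
    rcases Nat.lt_succ_iff_lt_or_eq.mp hi with h | h
    · exact lt_trans (ih (by omega) i h) hstep
    · subst h; exact hstep

/-- At a right cluster end, the discretized value equals the deadline. -/
lemma disc_eq_d (d : ℕ → ℕ) (n k : ℕ) (hk : k + 1 < n) (hp : 0 < disc d n (k + 1))
    (hne : disc d n (k + 1) ≠ disc d n k + 1) : disc d n k = d k := by
  have heq := disc_succ d n k hk
  rcases le_or_gt (disc d n (k + 1) - 1) (d k) with h | h
  · rw [min_eq_left h] at heq; omega
  · rw [min_eq_right h.le] at heq; exact heq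

/-- Core counting lemma: if `disc d n k = d k` then the primaries of tasks `0..k`
occupy exactly the positions `disc d n 0, ..., disc d n k`. -/
lemma core (n : ℕ) (d p : ℕ → ℕ)
    (hmono : ∀ i j, i ≤ j → j < n → d i ≤ d j)
    (hapos : ∀ i < n, 0 < disc d n i)
    (hpdist : ∀ i < n, ∀ j < n, i ≠ j → p i ≠ p j)
    (hpd : ∀ i < n, p i ≤ d i)
    (hprim : ∀ i < n, ∃ m < n, p i = disc d n m)
    (k : ℕ) (hk : k < n) (hak : disc d n k = d k) :
    (Finset.Icc 0 k).image p = (Finset.Icc 0 k).image (disc d n) := by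
  have hpinj : Set.InjOn p (Finset.Icc 0 k : Finset ℕ) := by
    intro i hi j hj hij
    simp only [Finset.coe_Icc, Set.mem_Icc] at hi hj
    by_contra hne
    exact hpdist i (by omega) j (by omega) hne hij
  have hainj : Set.InjOn (disc d n) (Finset.Icc 0 k : Finset ℕ) := by
    intro i hi j hj hij
    simp only [Finset.coe_Icc, Set.mem_Icc] at hi hj
    by_contra hne
    rcases Nat.lt_or_ge i j with h | h
    · have := disc_lt d n hapos j (by omega) i h; omega
    · have hji : j < i := by omega
      have := disc_lt d n hapos i (by omega) j hji; omega
  apply Finset.eq_of_subset_of_card_le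
  · intro x hx
    obtain ⟨i, hi, rfl⟩ := Finset.mem_image.mp hx
    simp only [Finset.mem_Icc] at hi
    obtain ⟨m, hm, hpm⟩ := hprim i (by omega)
    refine Finset.mem_image.mpr ⟨m, Finset.mem_Icc.mpr ⟨Nat.zero_le _, ?_⟩, hpm.symm⟩
    by_contra hmk
    push_neg at hmk
    have h1 : disc d n k < disc d n m := disc_lt d n hapos m hm k hmk
    have h2 : p i ≤ d i := hpd i (by omega)
    have h3 : d i ≤ d k := hmono i k hi.2 hk
    omega
  · rw [Finset.card_image_of_injOn hainj, Finset.card_image_of_injOn hpinj]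

theorem stmt_7 (n : ℕ) (d p s : ℕ → ℕ)
    (hmono : ∀ i j, i ≤ j → j < n → d i ≤ d j)
    (hapos : ∀ i < n, 0 < disc d n i)
    (hle : ∀ i < n, d i ≤ 2 * n)
    (hf : Feasible2V n d p s)
    (hprim : ∀ i < n, ∃ m < n, p i = disc d n m)
    (lo hi : ℕ) (hlohi : lo ≤ hi) (hhi : hi < n)
    (hconsec : ∀ m, lo ≤ m → m < hi → disc d n (m + 1) = disc d n m + 1)
    (hleft : lo = 0 ∨ disc d n lo ≠ disc d n (lo - 1) + 1)
    (hright : hi = n - 1 ∨ disc d n (hi + 1) ≠ disc d n hi + 1) :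
    (Finset.Icc lo hi).image p = (Finset.Icc lo hi).image (disc d n) := by
  have hpdist := hf.2.1
  have hpd := hf.2.2.2.2.1
  have hpinj : ∀ i < n, ∀ j < n, p i = p j → i = j := by
    intro i hi j hj h
    by_contra hne
    exact hpdist i hi j hj hne h
  -- `disc d n hi = d hi`
  have hdhi : disc d n hi = d hi := by
    rcases Nat.eq_or_lt_of_le (Nat.succ_le_of_lt hhi) with h | h
    · have hhe : hi = n - 1 := by omega
      rw [hhe]; exact disc_last d n
    · rcases hright with h' | h'
      · omega
      · exact disc_eq_d d n hi h (hapos (hi + 1) h) h'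
  -- every primary of a task in [lo, hi] is some `disc d n m` with m ∈ [lo, hi]
  have key : ∀ i, lo ≤ i → i ≤ hi → ∃ m, lo ≤ m ∧ m ≤ hi ∧ p i = disc d n m := by
    intro i hli hih
    obtain ⟨m, hm, hpm⟩ := hprim i (by omega)
    have hmhi : m ≤ hi := by
      by_contra hc
      push_neg at hc
      have h1 := disc_lt d n hapos m hm hi hc
      have h2 := hpd i (by omega)
      have h3 := hmono i hi hih hhi
      omega
    have hmlo : lo ≤ m := by
      rcases Nat.eq_zero_or_pos lo with h0 | h0
      · omega
      · by_contra hc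
        push_neg at hc
        have hl1 : (lo - 1) + 1 < n := by omega
        have hl1' : (lo - 1) + 1 = lo := by omega
        have hne : disc d n lo ≠ disc d n (lo - 1) + 1 := hleft.resolve_left (by omega)
        have hdl : disc d n (lo - 1) = d (lo - 1) := by
          apply disc_eq_d d n (lo - 1) hl1
          · rw [hl1']; exact hapos lo (by omega)
          · rw [hl1']; exact hne
        have hcore := core n d p hmono hapos hpdist hpd hprim (lo - 1) (by omega) hdl
        have hmem : disc d n m ∈ (Finset.Icc 0 (lo - 1)).image (disc d n) :=
          Finset.mem_image.mpr ⟨m, Finset.mem_Icc.mpr ⟨Nat.zero_le _, by omega⟩, rfl⟩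
        rw [← hcore] at hmem
        obtain ⟨j, hj, hpj⟩ := Finset.mem_image.mp hmem
        simp only [Finset.mem_Icc] at hj
        have hji : j = i := hpinj j (by omega) i (by omega) (hpj.trans hpm.symm)
        omega
    exact ⟨m, hmlo, hmhi, hpm⟩
  have hpinjOn : Set.InjOn p (Finset.Icc lo hi : Finset ℕ) := by
    intro i hi' j hj' hij
    simp only [Finset.coe_Icc, Set.mem_Icc] at hi' hj'
    exact hpinj i (by omega) j (by omega) hij
  have hainjOn : Set.InjOn (disc d n) (Finset.Icc lo hi : Finset ℕ) := by
    intro i hi' j hj' hij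
    simp only [Finset.coe_Icc, Set.mem_Icc] at hi' hj'
    by_contra hne
    rcases Nat.lt_or_ge i j with h | h
    · have := disc_lt d n hapos j (by omega) i h; omega
    · have hji : j < i := by omega
      have := disc_lt d n hapos i (by omega) j hji; omega
  apply Finset.eq_of_subset_of_card_le
  · intro x hx
    obtain ⟨i, hi', rfl⟩ := Finset.mem_image.mp hx
    simp only [Finset.mem_Icc] at hi'
    obtain ⟨m, h1, h2, h3⟩ := key i hi'.1 hi'.2
    exact Finset.mem_image.mpr ⟨m, Finset.mem_Icc.mpr ⟨h1, h2⟩, h3.symm⟩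
  · rw [Finset.card_image_of_injOn hainjOn, Finset.card_image_of_injOn hpinjOn]
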